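/- Let |K| = q², let C be a left ideal of R = K[G,Θ,α], and suppose α(x,y)^q = α(x,y) for all x, y ∈ G. Then the Hermitian dual of C equals the image under the adjoint map of the right annihilator of C^{(q)}: C^{⊥_h} = {â : a ∈ Ann_r(C^{(q)})}, where C^{(q)} = {Σ_g c_g^q ḡ : Σ_g c_g ḡ ∈ C}. -/

import Mathlib

open Finset

variable {K : Type*} {G : Type*}

/-- Multiplication of the twisted skew group ring `K[G,Θ,α]`:
`(Σ_g a_g ḡ)·(Σ_h b_h h̄) = Σ_{g,h} a_g·Θ(g)(b_h)·α(g,h)·(gh)‾`. -/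
def tsMul [Field K] [Group G] [Fintype G] [DecidableEq G]
    (Θ : G →* RingAut K) (α : G → G → Kˣ) (a b : G → K) : G → K :=
  fun x => ∑ p : G × G, if p.1 * p.2 = x then a p.1 * Θ p.1 (b p.2) * (α p.1 p.2 : K) else 0

/-- The identity element `1̄` of the twisted skew group ring. -/
def tsOne [Field K] [Group G] [DecidableEq G] : (G → K) := fun x => if x = 1 then 1 else 0

/-- The adjoint map `a ↦ â = Σ_g Θ(g⁻¹)(a_g)·α(g,g⁻¹)·(g⁻¹)‾`. -/
def tsAdj [Field K] [Group G] (Θ : G →* RingAut K) (α : G → G → Kˣ) (a : G → K) : G → K :=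
  fun x => Θ x (a x⁻¹) * (α x⁻¹ x : K)

/-!
Since `|K| = q²`, the map `x ↦ x ^ q` is a ring involution of `K`; it commutes with every
`Θ g` and fixes `α`, so it is multiplicative on `R = K[G,Θ,α]`. Unwinding the definitions,
the coefficient of `1̄` in `c^{(q)} · a` is `⟨c, â⟩_h ^ q`, which gives one inclusion. For the
other, write `b = â` (the adjoint is surjective) and test `b` against the elements `x⁻¹‾ · c`
of `C`: by associativity the coefficient of `1̄` in `(x⁻¹‾ · c)^{(q)} · a = x⁻¹‾ · (c^{(q)} · a)`
is, up to a unit, `Θ(x⁻¹)` of the coefficient of `x̄` in `c^{(q)} · a`.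
-/

lemma FiniteField.exists_ringHom_eq_pow_of_card_eq_sq {K : Type*} [Field K] [Fintype K] {q : ℕ}
    (hq : Fintype.card K = q ^ 2) : ∃ φ : K →+* K, ∀ x, φ x = x ^ q := by
  obtain ⟨p, _⟩ := CharP.exists K
  have hp := CharP.char_is_prime K p
  have : Fact p.Prime := ⟨hp⟩
  obtain ⟨n, -, hn⟩ := FiniteField.card K p
  have hdvd : q ∣ p ^ (n : ℕ) := hn ▸ hq ▸ dvd_pow_self q two_ne_zero
  obtain ⟨m, -, rfl⟩ := (Nat.dvd_prime_pow hp).mp hdvd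
  exact ⟨iterateFrobenius K p m, iterateFrobenius_def p m⟩

lemma FiniteField.pow_pow_of_card_eq_sq {K : Type*} [Field K] [Fintype K] {q : ℕ}
    (hq : Fintype.card K = q ^ 2) (x : K) : (x ^ q) ^ q = x := by
  rw [← pow_mul, ← sq, ← hq, FiniteField.pow_card]

section TwistedSkewGroupRing

variable [Field K] [Group G] (Θ : G →* RingAut K) (α : G → G → Kˣ)

lemma apply_apply_eq_mul_apply (g h : G) (z : K) : Θ g (Θ h z) = Θ (g * h) z := by
  rw [map_mul, RingAut.mul_apply]

lemma tsAdj_surjective (hstab : ∀ g x y : G, Θ g ((α x y : K)) = (α x y : K)) :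
    Function.Surjective (tsAdj Θ α) := by
  intro b
  refine ⟨fun y => Θ y (b y⁻¹) * (α y y⁻¹ : K)⁻¹, funext fun x => ?_⟩
  simp only [tsAdj, inv_inv, map_mul, map_inv₀, hstab, apply_apply_eq_mul_apply, mul_inv_cancel,
    map_one, RingAut.one_apply]
  exact inv_mul_cancel_right₀ (α x⁻¹ x).ne_zero (b x)

lemma cocycle_inv_mul_eq
    (hnorm : ∀ g : G, α g 1 = 1 ∧ α 1 g = 1)
    (hcoc : ∀ g₁ g₂ g₃ : G, α g₁ (g₂ * g₃) * α g₂ g₃ = α (g₁ * g₂) g₃ * α g₁ g₂) (g : G) :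
    α g⁻¹ g = α g g⁻¹ := by
  simpa [(hnorm g).1, (hnorm g).2] using hcoc g g⁻¹ g

variable [Fintype G] [DecidableEq G]

lemma tsMul_apply (a b : G → K) (x : G) :
    tsMul Θ α a b x = ∑ g : G, a g * Θ g (b (g⁻¹ * x)) * (α g (g⁻¹ * x) : K) := by
  rw [tsMul, Fintype.sum_prod_type]
  refine sum_congr rfl fun g _ => ?_
  rw [sum_eq_single (g⁻¹ * x) (fun h _ hne => if_neg ?_) (by simp)]
  · simp
  · rintro rfl
    exact hne (inv_mul_cancel_left g h).symm

lemma single_tsMul_apply (g : G) (u : G → K) (x : G) :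
    tsMul Θ α (Pi.single g 1) u x = Θ g (u (g⁻¹ * x)) * (α g (g⁻¹ * x) : K) := by
  rw [tsMul_apply, sum_eq_single g (fun h _ hne => by simp [hne]) (by simp)]
  simp

lemma tsMul_assoc (hstab : ∀ g x y : G, Θ g ((α x y : K)) = (α x y : K))
    (hcoc : ∀ g₁ g₂ g₃ : G, α g₁ (g₂ * g₃) * α g₂ g₃ = α (g₁ * g₂) g₃ * α g₁ g₂)
    (a b c : G → K) : tsMul Θ α (tsMul Θ α a b) c = tsMul Θ α a (tsMul Θ α b c) := by
  funext x
  simp only [tsMul_apply, sum_mul, mul_sum, map_sum]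
  rw [sum_comm]
  refine sum_congr rfl fun g _ => ?_
  rw [← Equiv.sum_comp (Equiv.mulLeft g)]
  refine sum_congr rfl fun k _ => ?_
  obtain ⟨y, rfl⟩ : ∃ y, x = g * k * y := ⟨(g * k)⁻¹ * x, by group⟩
  have hgk : (g * k)⁻¹ * (g * k * y) = y := inv_mul_cancel_left _ _
  have hg : g⁻¹ * (g * k * y) = k * y := by rw [mul_assoc, inv_mul_cancel_left]
  have hcoc' := congrArg Units.val (hcoc g k y)
  simp only [Equiv.coe_mulLeft, inv_mul_cancel_left, hgk, hg, map_mul, hstab, RingAut.mul_apply,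
    Units.val_mul] at hcoc' ⊢
  linear_combination (a g * Θ g (b k) * Θ g (Θ k (c y))) * hcoc'.symm

lemma map_comp_tsMul (φ : K →+* K) (hΘ : ∀ g x, φ (Θ g x) = Θ g (φ x))
    (hα : ∀ x y, φ (α x y) = α x y) (r c : G → K) :
    (fun x => φ (tsMul Θ α r c x)) = tsMul Θ α (fun g => φ (r g)) (fun g => φ (c g)) := by
  funext x
  simp only [tsMul_apply, map_sum, map_mul, hΘ, hα]

lemma tsMul_apply_one_eq_map_sum (hnorm : ∀ g : G, α g 1 = 1 ∧ α 1 g = 1)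
    (hcoc : ∀ g₁ g₂ g₃ : G, α g₁ (g₂ * g₃) * α g₂ g₃ = α (g₁ * g₂) g₃ * α g₁ g₂)
    (φ : K →+* K) (hφ : ∀ x, φ (φ x) = x) (c a : G → K) :
    tsMul Θ α (fun g => φ (c g)) a 1 = φ (∑ g : G, c g * φ (tsAdj Θ α a g)) := by
  simp only [tsMul_apply, map_sum, map_mul, hφ, tsAdj, mul_one,
    cocycle_inv_mul_eq α hnorm hcoc, mul_assoc]

end TwistedSkewGroupRing

/-- **Hermitian duality.** Let `|K| = q²`, let `C` be a left ideal of
`R = K[G,Θ,α]`, and suppose `α(x,y)^q = α(x,y)` for all `x,y ∈ G`.  Then the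
Hermitian dual of `C` equals the image under the adjoint map of the right
annihilator of `C^{(q)}`: `C^{⊥_h} = {â : a ∈ Ann_r(C^{(q)})}`. -/
theorem stmt13 [Field K] [Fintype K] [Group G] [Fintype G] [DecidableEq G]
    (q : ℕ) (hq : Fintype.card K = q ^ 2)
    (Θ : G →* RingAut K) (α : G → G → Kˣ)
    (hnorm : ∀ g : G, α g 1 = 1 ∧ α 1 g = 1)
    (hcoc : ∀ g₁ g₂ g₃ : G, α g₁ (g₂ * g₃) * α g₂ g₃ = α (g₁ * g₂) g₃ * α g₁ g₂)
    (hstab : ∀ g x y : G, Θ g ((α x y : K)) = (α x y : K))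
    (hαq : ∀ x y : G, (α x y : K) ^ q = (α x y : K))
    (C : Submodule K (G → K))
    (hC : ∀ r : G → K, ∀ c ∈ C, tsMul Θ α r c ∈ C) :
    {b : G → K | ∀ c ∈ C, ∑ g : G, c g * (b g) ^ q = 0} =
      tsAdj Θ α '' {a : G → K | ∀ c ∈ C, tsMul Θ α (fun g => (c g) ^ q) a = 0} := by
  obtain ⟨φ, hφ⟩ := FiniteField.exists_ringHom_eq_pow_of_card_eq_sq hq
  have hφφ : ∀ x, φ (φ x) = x := fun x => by rw [hφ, hφ, FiniteField.pow_pow_of_card_eq_sq hq]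
  have hφα : ∀ x y, φ (α x y) = α x y := fun x y => by rw [hφ, hαq]
  have hφΘ : ∀ g x, φ (Θ g x) = Θ g (φ x) := fun g x => by rw [hφ, hφ, map_pow]
  simp only [← hφ]
  ext b
  constructor
  · intro hb
    obtain ⟨a, rfl⟩ := tsAdj_surjective Θ α hstab b
    refine ⟨a, fun c hc => funext fun x => ?_, rfl⟩
    have hx : tsMul Θ α (Pi.single x⁻¹ 1) (tsMul Θ α (fun g => φ (c g)) a) 1 = 0 := by
      have hsingle : (fun g => φ ((Pi.single x⁻¹ (1 : K) : G → K) g)) = Pi.single x⁻¹ 1 := by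
        funext g
        rw [Pi.apply_single (fun _ => φ) (fun _ => map_zero φ), map_one]
      rw [← tsMul_assoc Θ α hstab hcoc, ← hsingle, ← map_comp_tsMul Θ α φ hφΘ hφα,
        tsMul_apply_one_eq_map_sum Θ α hnorm hcoc φ hφφ, hb _ (hC _ c hc), map_zero]
    simpa [single_tsMul_apply] using hx
  · rintro ⟨a, ha, rfl⟩ c hc
    have h1 := congrFun (ha c hc) 1
    rwa [tsMul_apply_one_eq_map_sum Θ α hnorm hcoc φ hφφ, Pi.zero_apply, map_eq_zero] at h1
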